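/- If a bipartite density matrix ρ_AB is separable, then it satisfies the reduction criterion: ρ_A ⊗ I_B - ρ_AB is positive semidefinite and I_A ⊗ ρ_B - ρ_AB is positive semidefinite, where ρ_A = Tr_B ρ_AB and ρ_B = Tr_A ρ_AB are the reduced density matrices. -/

import Mathlib

open Matrix BigOperators
open scoped ComplexOrder

noncomputable section

/-- A density matrix: positive semidefinite with trace one. -/
def IsDensity {α : Type*} [Fintype α] (ρ : Matrix α α ℂ) : Prop :=
  ρ.PosSemidef ∧ ρ.trace = 1

/-- Tensor (Kronecker) product of matrices on a product index type. -/
def tens {α β : Type*} (σ : Matrix α α ℂ) (τ : Matrix β β ℂ) :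
    Matrix (α × β) (α × β) ℂ :=
  fun p q => σ p.1 q.1 * τ p.2 q.2

/-- Separability: a finite convex combination of product density matrices. -/
def SeparableState {α β : Type*} [Fintype α] [Fintype β]
    (ρ : Matrix (α × β) (α × β) ℂ) : Prop :=
  ∃ (k : ℕ) (p : Fin k → ℝ) (σ : Fin k → Matrix α α ℂ) (τ : Fin k → Matrix β β ℂ),
    (∀ i, 0 ≤ p i) ∧ ∑ i, p i = 1 ∧ (∀ i, IsDensity (σ i)) ∧ (∀ i, IsDensity (τ i)) ∧
    ρ = ∑ i, (p i : ℂ) • tens (σ i) (τ i)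

/-- Partial transpose with respect to the second system. -/
def ptransB {α β : Type*} (ρ : Matrix (α × β) (α × β) ℂ) :
    Matrix (α × β) (α × β) ℂ :=
  fun p q => ρ (p.1, q.2) (q.1, p.2)

/-- Partial trace over the second system. -/
def ptrB {α β : Type*} [Fintype β] (ρ : Matrix (α × β) (α × β) ℂ) : Matrix α α ℂ :=
  fun i k => ∑ j, ρ (i, j) (k, j)

/-- Partial trace over the first system. -/
def ptrA {α β : Type*} [Fintype α] (ρ : Matrix (α × β) (α × β) ℂ) : Matrix β β ℂ :=
  fun j l => ∑ i, ρ (i, j) (i, l)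

/-- Rank-one projection |ψ⟩⟨ψ| associated with a vector. -/
def projv {α : Type*} (ψ : α → ℂ) : Matrix α α ℂ :=
  fun x y => ψ x * (starRingEnd ℂ) (ψ y)

/-- Unit vector condition. -/
def UnitVec {α : Type*} [Fintype α] (ψ : α → ℂ) : Prop :=
  ∑ x, Complex.normSq (ψ x) = 1

/-- Two-party reduced state ρ_АБ of a tripartite pure state. -/
def rhoAB {α β γ : Type*} [Fintype γ] (ψ : α × β × γ → ℂ) :
    Matrix (α × β) (α × β) ℂ :=
  fun p q => ∑ c, ψ (p.1, p.2, c) * (starRingEnd ℂ) (ψ (q.1, q.2, c))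

def rhoBC {α β γ : Type*} [Fintype α] (ψ : α × β × γ → ℂ) :
    Matrix (β × γ) (β × γ) ℂ :=
  fun p q => ∑ a, ψ (a, p.1, p.2) * (starRingEnd ℂ) (ψ (a, q.1, q.2))

def rhoAC {α β γ : Type*} [Fintype β] (ψ : α × β × γ → ℂ) :
    Matrix (α × γ) (α × γ) ℂ :=
  fun p q => ∑ b, ψ (p.1, b, p.2) * (starRingEnd ℂ) (ψ (q.1, b, q.2))

def rhoA {α β γ : Type*} [Fintype β] [Fintype γ] (ψ : α × β × γ → ℂ) :
    Matrix α α ℂ :=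
  fun x y => ∑ b, ∑ c, ψ (x, b, c) * (starRingEnd ℂ) (ψ (y, b, c))

def rhoB {α β γ : Type*} [Fintype α] [Fintype γ] (ψ : α × β × γ → ℂ) :
    Matrix β β ℂ :=
  fun x y => ∑ a, ∑ c, ψ (a, x, c) * (starRingEnd ℂ) (ψ (a, y, c))

def rhoC {α β γ : Type*} [Fintype α] [Fintype β] (ψ : α × β × γ → ℂ) :
    Matrix γ γ ℂ :=
  fun x y => ∑ a, ∑ b, ψ (a, b, x) * (starRingEnd ℂ) (ψ (a, b, y))

/-- `x` majorizes `y` (for nonnegative vectors, with implicit zero padding):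
the sum of any `|T|` entries of `y` is dominated by some choice of at most
`|T|` entries of `x`, and the total sums agree. -/
def Majorizes {α β : Type*} [Fintype α] [Fintype β] (x : α → ℝ) (y : β → ℝ) : Prop :=
  (∀ T : Finset β, ∃ S : Finset α, S.card ≤ T.card ∧ ∑ i ∈ T, y i ≤ ∑ i ∈ S, x i) ∧
  ∑ i, x i = ∑ i, y i

/-- Von Neumann entropy of a Hermitian matrix, via its eigenvalues. -/
def vN {α : Type*} [Fintype α] [DecidableEq α] {ρ : Matrix α α ℂ}
    (h : ρ.IsHermitian) : ℝ :=
  -∑ i, h.eigenvalues i * Real.log (h.eigenvalues i)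

/-- Tensor rank of a tripartite vector: least number of product vectors summing to it. -/
def tensorRank {α β γ : Type*} [Fintype α] [Fintype β] [Fintype γ]
    (ψ : α × β × γ → ℂ) : ℕ :=
  sInf {r : ℕ | ∃ (a : Fin r → α → ℂ) (b : Fin r → β → ℂ) (c : Fin r → γ → ℂ),
    ∀ x, ψ x = ∑ i, a i x.1 * b i x.2.1 * c i x.2.2}

/-- Orthonormal family of vectors. -/
def OrthonormalFam {α : Type*} [Fintype α] {k : ℕ} (v : Fin k → α → ℂ) : Prop :=
  ∀ i j, ∑ x, (starRingEnd ℂ) (v i x) * v j x = if i = j then 1 else 0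

/-- Maximally correlated state: ρ = Σ_{i,j} c_{ij} |i_B⟩⟨j_B| ⊗ |i_C⟩⟨j_C|
for some orthonormal families. -/
def IsMaxCorrelated {β γ : Type*} [Fintype β] [Fintype γ]
    (ρ : Matrix (β × γ) (β × γ) ℂ) : Prop :=
  ∃ (k : ℕ) (c : Matrix (Fin k) (Fin k) ℂ) (e : Fin k → β → ℂ) (f : Fin k → γ → ℂ),
    OrthonormalFam e ∧ OrthonormalFam f ∧
    ∀ p q, ρ p q = ∑ i, ∑ j,
      c i j * (e i p.1 * (starRingEnd ℂ) (e j q.1)) * (f i p.2 * (starRingEnd ℂ) (f j q.2))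

/-! For `ρ = ∑ pᵢ σᵢ ⊗ τᵢ` the partial trace is `ρ_A = ∑ pᵢ σᵢ`, so
`ρ_A ⊗ 1 - ρ = ∑ pᵢ σᵢ ⊗ (1 - τᵢ)`. Each `1 - τᵢ` is positive semidefinite because the
eigenvalues of a density matrix are nonnegative and sum to its trace `1`, and Kronecker
products and nonnegative combinations of positive semidefinite matrices stay positive
semidefinite. The other half is symmetric. -/

open scoped MatrixOrder in
theorem Matrix.PosSemidef.one_sub_of_trace_eq_one {n 𝕜 : Type*} [Fintype n] [DecidableEq n]
    [RCLike 𝕜] {A : Matrix n n 𝕜} (hA : A.PosSemidef) (htr : A.trace = 1) :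
    (1 - A).PosSemidef := by
  rw [← Matrix.nonneg_iff_posSemidef, sub_nonneg,
    CFC.le_one_iff (R := ℝ) A hA.isHermitian.isSelfAdjoint,
    hA.isHermitian.spectrum_real_eq_range_eigenvalues]
  rintro _ ⟨i, rfl⟩
  have hsum : ∑ j, hA.isHermitian.eigenvalues j = 1 := by
    exact_mod_cast htr ▸ hA.isHermitian.trace_eq_sum_eigenvalues.symm
  rw [← hsum]
  exact Finset.single_le_sum (fun j _ => hA.eigenvalues_nonneg j) (Finset.mem_univ i)

theorem Matrix.posSemidef_sum_ofReal_smul {n ι : Type*} [Fintype n] [Fintype ι]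
    {p : ι → ℝ} (hp : ∀ i, 0 ≤ p i) {X : ι → Matrix n n ℂ} (hX : ∀ i, (X i).PosSemidef) :
    (∑ i, (p i : ℂ) • X i).PosSemidef :=
  posSemidef_sum _ fun i _ => (hX i).smul (Complex.zero_le_real.mpr (hp i))

section tens

variable {α β ι : Type*} [Fintype ι]

open scoped Kronecker in
theorem Matrix.PosSemidef.tens [Fintype α] [Fintype β] {A : Matrix α α ℂ}
    {B : Matrix β β ℂ} (hA : A.PosSemidef) (hB : B.PosSemidef) : (tens A B).PosSemidef :=
  hA.kronecker hB

theorem ptrB_sum_smul_tens [Fintype β] (c : ι → ℂ) (σ : ι → Matrix α α ℂ)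
    (τ : ι → Matrix β β ℂ) :
    ptrB (∑ i, c i • tens (σ i) (τ i)) = ∑ i, (c i * (τ i).trace) • σ i := by
  ext a a'
  simp only [ptrB, tens, Matrix.sum_apply, Matrix.smul_apply, smul_eq_mul, trace, diag,
    Finset.mul_sum, Finset.sum_mul]
  rw [Finset.sum_comm]
  simp only [mul_comm, mul_left_comm]

theorem ptrA_sum_smul_tens [Fintype α] (c : ι → ℂ) (σ : ι → Matrix α α ℂ)
    (τ : ι → Matrix β β ℂ) :
    ptrA (∑ i, c i • tens (σ i) (τ i)) = ∑ i, (c i * (σ i).trace) • τ i := by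
  ext b b'
  simp only [ptrA, tens, Matrix.sum_apply, Matrix.smul_apply, smul_eq_mul, trace, diag,
    Finset.mul_sum, Finset.sum_mul]
  rw [Finset.sum_comm]
  simp only [mul_comm, mul_left_comm]

theorem tens_sum_smul_one_sub [DecidableEq β] (c : ι → ℂ) (σ : ι → Matrix α α ℂ)
    (τ : ι → Matrix β β ℂ) :
    tens (∑ i, c i • σ i) 1 - ∑ i, c i • tens (σ i) (τ i) =
      ∑ i, c i • tens (σ i) (1 - τ i) := by
  ext p q
  simp [tens, Matrix.sum_apply, mul_sub, Finset.sum_mul, mul_assoc]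

theorem one_sub_tens_sum_smul [DecidableEq α] (c : ι → ℂ) (σ : ι → Matrix α α ℂ)
    (τ : ι → Matrix β β ℂ) :
    tens 1 (∑ i, c i • τ i) - ∑ i, c i • tens (σ i) (τ i) =
      ∑ i, c i • tens (1 - σ i) (τ i) := by
  ext p q
  simp [tens, Matrix.sum_apply, sub_mul, mul_sub, Finset.mul_sum, mul_left_comm,
    Finset.sum_sub_distrib]

end tens

theorem separable_implies_reduction_general {M N : ℕ}
    (ρ : Matrix (Fin M × Fin N) (Fin M × Fin N) ℂ)
    (hsep : SeparableState ρ) :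
    (tens (ptrB ρ) (1 : Matrix (Fin N) (Fin N) ℂ) - ρ).PosSemidef ∧
    (tens (1 : Matrix (Fin M) (Fin M) ℂ) (ptrA ρ) - ρ).PosSemidef := by
  obtain ⟨k, p, σ, τ, hp, -, hσ, hτ, rfl⟩ := hsep
  have hρA : ptrB (∑ i, (p i : ℂ) • tens (σ i) (τ i)) = ∑ i, (p i : ℂ) • σ i := by
    simp only [ptrB_sum_smul_tens, fun i => (hτ i).2, mul_one]
  have hρB : ptrA (∑ i, (p i : ℂ) • tens (σ i) (τ i)) = ∑ i, (p i : ℂ) • τ i := by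
    simp only [ptrA_sum_smul_tens, fun i => (hσ i).2, mul_one]
  rw [hρA, hρB, tens_sum_smul_one_sub, one_sub_tens_sum_smul]
  exact ⟨posSemidef_sum_ofReal_smul hp fun i =>
      (hσ i).1.tens ((hτ i).1.one_sub_of_trace_eq_one (hτ i).2),
    posSemidef_sum_ofReal_smul hp fun i =>
      ((hσ i).1.one_sub_of_trace_eq_one (hσ i).2).tens (hτ i).1⟩

/-- a separable bipartite density matrix satisfies the reduction
criterion: ρ_A ⊗ I_B − ρ_AB ≥ 0 and I_A ⊗ ρ_B − ρ_AB ≥ 0. -/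
theorem separable_implies_reduction {M N : ℕ}
    (ρ : Matrix (Fin M × Fin N) (Fin M × Fin N) ℂ)
    (hρ : IsDensity ρ) (hsep : SeparableState ρ) :
    (tens (ptrB ρ) (1 : Matrix (Fin N) (Fin N) ℂ) - ρ).PosSemidef ∧
    (tens (1 : Matrix (Fin M) (Fin M) ℂ) (ptrA ρ) - ρ).PosSemidef :=
  separable_implies_reduction_general ρ hsep
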